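/- Let E be a real inner product space and let α₁,…,α_m ∈ E be finitely many vectors. Call a vector w ∈ E dominant if ⟨w, α_i⟩ ≥ 0 for every i, and for u, v ∈ E write u ⪯ v if v − u = ∑_{i=1}^{m} c_i α_i with all c_i ≥ 0. Let c ≥ 0 and suppose j, k, l, j′, k′ ∈ E are all dominant and satisfy: l ⪯ j + k, j ⪯ k′ + l, k ⪯ j′ + l, together with ‖j′‖ ≤ ‖j‖ + c and ‖k′‖ ≤ ‖k‖ + c. Then ‖l‖ ≤ ‖j‖ + ‖k‖ and |‖j‖ − ‖k‖| ≤ ‖l‖ + c. -/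

import Mathlib

/-- `w` is dominant with respect to the family `α` of vectors:
it pairs nonnegatively with every `α i`. -/
def IsDominant {E : Type*} [NormedAddCommGroup E] [InnerProductSpace ℝ E]
    {m : ℕ} (α : Fin m → E) (w : E) : Prop :=
  ∀ i, (0 : ℝ) ≤ inner ℝ w (α i)

/-- The dominance order: `u ⪯ v` iff `v − u` is a nonnegative combination of the `α i`. -/
def DomLE {E : Type*} [NormedAddCommGroup E] [InnerProductSpace ℝ E]
    {m : ℕ} (α : Fin m → E) (u v : E) : Prop :=
  ∃ c : Fin m → ℝ, (∀ i, 0 ≤ c i) ∧ v - u = ∑ i, c i • α i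

/-!
A nonnegative combination of the `α i` pairs nonnegatively with any dominant vector. If
`u ⪯ v` with `u, v` dominant, then `‖v‖² - ‖u‖² = ⟪v + u, v - u⟫ ≥ 0`, so the dominance order
is monotone for the norm on dominant vectors. The three dominance relations then give
`‖l‖ ≤ ‖j + k‖`, `‖j‖ ≤ ‖k′ + l‖`, `‖k‖ ≤ ‖j′ + l‖`, and the triangle inequality finishes.
-/

section Dominance

variable {E : Type*} [NormedAddCommGroup E] [InnerProductSpace ℝ E] {m : ℕ} {α : Fin m → E}

theorem real_inner_add_sub_eq_norm_sq_sub_norm_sq (x y : E) :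
    inner ℝ (x + y) (x - y) = ‖x‖ ^ 2 - ‖y‖ ^ 2 := by
  rw [inner_add_left, inner_sub_right, inner_sub_right, real_inner_self_eq_norm_sq,
    real_inner_self_eq_norm_sq, real_inner_comm x y]
  ring

theorem IsDominant.add {u v : E} (hu : IsDominant α u) (hv : IsDominant α v) :
    IsDominant α (u + v) := fun i => by
  rw [inner_add_left]
  exact add_nonneg (hu i) (hv i)

theorem DomLE.inner_sub_nonneg {u v w : E} (h : DomLE α u v) (hw : IsDominant α w) :
    0 ≤ inner ℝ w (v - u) := by
  obtain ⟨d, hd, hvu⟩ := h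
  rw [hvu, inner_sum]
  exact Finset.sum_nonneg fun i _ => by
    rw [real_inner_smul_right]
    exact mul_nonneg (hd i) (hw i)

theorem DomLE.norm_le {u v : E} (h : DomLE α u v) (hu : IsDominant α u)
    (hv : IsDominant α v) : ‖u‖ ≤ ‖v‖ := by
  have hsq : 0 ≤ ‖v‖ ^ 2 - ‖u‖ ^ 2 := by
    rw [← real_inner_add_sub_eq_norm_sq_sub_norm_sq]
    exact h.inner_sub_nonneg (hv.add hu)
  exact (sq_le_sq₀ (norm_nonneg u) (norm_nonneg v)).1 (sub_nonneg.1 hsq)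

end Dominance

theorem spectral_localization_weights_general {E : Type*} [NormedAddCommGroup E]
    [InnerProductSpace ℝ E] {m : ℕ} (α : Fin m → E)
    (c : ℝ) (j k l j' k' : E)
    (hj : IsDominant α j) (hk : IsDominant α k) (hl : IsDominant α l)
    (hj' : IsDominant α j') (hk' : IsDominant α k')
    (h1 : DomLE α l (j + k)) (h2 : DomLE α j (k' + l)) (h3 : DomLE α k (j' + l))
    (hnj : ‖j'‖ ≤ ‖j‖ + c) (hnk : ‖k'‖ ≤ ‖k‖ + c) :
    ‖l‖ ≤ ‖j‖ + ‖k‖ ∧ |‖j‖ - ‖k‖| ≤ ‖l‖ + c := by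
  have hl_le : ‖l‖ ≤ ‖j + k‖ := h1.norm_le hl (hj.add hk)
  have hj_le : ‖j‖ ≤ ‖k' + l‖ := h2.norm_le hj (hk'.add hl)
  have hk_le : ‖k‖ ≤ ‖j' + l‖ := h3.norm_le hk (hj'.add hl)
  have := norm_add_le j k
  have := norm_add_le k' l
  have := norm_add_le j' l
  exact ⟨by linarith, abs_sub_le_iff.2 ⟨by linarith, by linarith⟩⟩

/-- Weight-lattice content of the spectral localization property: if `j, k, l, j′, k′`
are dominant, `l ⪯ j + k`, `j ⪯ k′ + l`, `k ⪯ j′ + l`, and `‖j′‖ ≤ ‖j‖ + c`,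
`‖k′‖ ≤ ‖k‖ + c`, then `‖l‖ ≤ ‖j‖ + ‖k‖` and `|‖j‖ − ‖k‖| ≤ ‖l‖ + c`. -/
theorem spectral_localization_weights {E : Type*} [NormedAddCommGroup E]
    [InnerProductSpace ℝ E] {m : ℕ} (α : Fin m → E)
    (c : ℝ) (hc : 0 ≤ c) (j k l j' k' : E)
    (hj : IsDominant α j) (hk : IsDominant α k) (hl : IsDominant α l)
    (hj' : IsDominant α j') (hk' : IsDominant α k')
    (h1 : DomLE α l (j + k)) (h2 : DomLE α j (k' + l)) (h3 : DomLE α k (j' + l))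
    (hnj : ‖j'‖ ≤ ‖j‖ + c) (hnk : ‖k'‖ ≤ ‖k‖ + c) :
    ‖l‖ ≤ ‖j‖ + ‖k‖ ∧ |‖j‖ - ‖k‖| ≤ ‖l‖ + c :=
  spectral_localization_weights_general α c j k l j' k' hj hk hl hj' hk' h1 h2 h3 hnj hnk
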